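/- Let A* be an n×n symmetric positive definite matrix, x* ∈ R^n with ‖x*‖ = Δ > 0, and P = I - x*x*ᵀ/Δ². Then (A*⁻¹ - (A*⁻¹x*x*ᵀA*⁻¹)/(x*ᵀA*⁻¹x*))† = P A* P, and equivalently A*⁻¹ - (A*⁻¹x*x*ᵀA*⁻¹)/(x*ᵀA*⁻¹x*) = (P A* P)†. -/

import Mathlib

open Matrix

noncomputable def euclidEnorm {m : Type*} [Fintype m] (x : m → ℝ) : ℝ := Real.sqrt (x ⬝ᵥ x)

/-- `X` satisfies the four Penrose conditions for `W`, i.e. `X = W†`. -/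
def IsMoorePenrose {n : ℕ} (W X : Matrix (Fin n) (Fin n) ℝ) : Prop :=
  W * X * W = W ∧ X * W * X = X ∧ (W * X)ᵀ = W * X ∧ (X * W)ᵀ = X * W

lemma mul_vmv {n : ℕ} (M : Matrix (Fin n) (Fin n) ℝ) (w v : Fin n → ℝ) :
    M * vecMulVec w v = vecMulVec (M.mulVec w) v := by
  ext i j
  simp [mul_apply, vecMulVec_apply, mulVec, dotProduct, Finset.sum_mul, mul_assoc]

lemma vmv_mul {n : ℕ} (M : Matrix (Fin n) (Fin n) ℝ) (w v : Fin n → ℝ) :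
    vecMulVec w v * M = vecMulVec w (M.vecMul v) := by
  ext i j
  simp [mul_apply, vecMulVec_apply, vecMul, dotProduct, Finset.mul_sum, mul_assoc]

lemma vmv_vmv {n : ℕ} (w v u z : Fin n → ℝ) :
    vecMulVec w v * vecMulVec u z = (v ⬝ᵥ u) • vecMulVec w z := by
  ext i j
  simp [mul_apply, vecMulVec_apply, dotProduct, Finset.sum_mul, Finset.mul_sum]
  congr 1; ext k; ring

lemma vmv_transpose {n : ℕ} (w v : Fin n → ℝ) :
    (vecMulVec w v)ᵀ = vecMulVec v w := by
  ext i j; simp [vecMulVec_apply, mul_comm]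

/-- For `A* ≻ 0`, `‖x*‖ = Δ > 0` and `P = I - x*x*ᵀ/Δ²`:
`(A*⁻¹ - A*⁻¹x*x*ᵀA*⁻¹/(x*ᵀA*⁻¹x*))† = P A* P` and conversely. -/
theorem projected_matrix_pseudoinverse {n : ℕ} (As : Matrix (Fin n) (Fin n) ℝ)
    (hAs : As.PosDef) (xs : Fin n → ℝ) (Δ : ℝ) (hΔ : 0 < Δ) (hxs : euclidEnorm xs = Δ)
    (P : Matrix (Fin n) (Fin n) ℝ)
    (hP : P = 1 - (Δ ^ 2)⁻¹ • vecMulVec xs xs) :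
    IsMoorePenrose
      (As⁻¹ - (xs ⬝ᵥ As⁻¹.mulVec xs)⁻¹ • (As⁻¹ * vecMulVec xs xs * As⁻¹))
      (P * As * P) ∧
    IsMoorePenrose (P * As * P)
      (As⁻¹ - (xs ⬝ᵥ As⁻¹.mulVec xs)⁻¹ • (As⁻¹ * vecMulVec xs xs * As⁻¹)) := by
  have hxs0 : xs ≠ 0 := by
    intro h
    rw [h] at hxs
    simp [euclidEnorm] at hxs
    exact absurd hxs.symm hΔ.ne'
  have hxx : xs ⬝ᵥ xs = Δ ^ 2 := by
    have h0 : (0:ℝ) ≤ xs ⬝ᵥ xs :=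
      Finset.sum_nonneg fun i _ => mul_self_nonneg _
    have := hxs
    unfold euclidEnorm at this
    nlinarith [Real.sq_sqrt h0, Real.sqrt_nonneg (xs ⬝ᵥ xs)]
  set c : ℝ := xs ⬝ᵥ As⁻¹.mulVec xs with hc
  have hcpos : 0 < c := by
    have := hAs.inv.dotProduct_mulVec_pos hxs0
    simpa [hc] using this
  have hc0 : c ≠ 0 := hcpos.ne'
  set Q : Matrix (Fin n) (Fin n) ℝ := vecMulVec xs xs with hQ
  set B : Matrix (Fin n) (Fin n) ℝ := As⁻¹ with hB
  have hBA : B * As = 1 := As.nonsing_inv_mul ((isUnit_iff_isUnit_det _).1 hAs.isUnit)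
  have hAB : As * B = 1 := As.mul_nonsing_inv ((isUnit_iff_isUnit_det _).1 hAs.isUnit)
  have hBsym : Bᵀ = B := (hAs.inv.isHermitian).eq
  -- Q * B * Q = c • Q
  have hvB : B.vecMul xs = B.mulVec xs := by
    conv_lhs => rw [← hBsym]
    rw [vecMul_transpose]
  have hQBQ : Q * (B * Q) = c • Q := by
    rw [hQ, mul_vmv, vmv_vmv]
  have hQQ : Q * Q = (Δ ^ 2) • Q := by rw [hQ, vmv_vmv, hxx]
  set W : Matrix (Fin n) (Fin n) ℝ := B - c⁻¹ • (B * Q * B) with hW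
  have hWsym : Wᵀ = W := by
    rw [hW, transpose_sub, transpose_smul, hBsym, transpose_mul, transpose_mul, hBsym,
      hQ, vmv_transpose, ← hQ, Matrix.mul_assoc]
  have hPsym : Pᵀ = P := by
    rw [hP, transpose_sub, transpose_one, transpose_smul, vmv_transpose]
  have hQP : Q * P = 0 := by
    rw [hP, Matrix.mul_sub, Matrix.mul_one, Matrix.mul_smul, hQQ, smul_smul,
      inv_mul_cancel₀ (by positivity), one_smul, sub_self]
  have hPQ : P * Q = 0 := by
    rw [hP, Matrix.sub_mul, Matrix.one_mul, Matrix.smul_mul, hQQ, smul_smul,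
      inv_mul_cancel₀ (by positivity), one_smul, sub_self]
  have hPP : P * P = P := by
    nth_rewrite 2 [hP]
    rw [Matrix.mul_sub, Matrix.mul_one, Matrix.mul_smul, hPQ, smul_zero, sub_zero]
  have hWQ : W * Q = 0 := by
    rw [hW, Matrix.sub_mul, Matrix.smul_mul]
    simp only [Matrix.mul_assoc]
    rw [hQBQ, Matrix.mul_smul, smul_smul, inv_mul_cancel₀ hc0, one_smul, sub_self]
  have hQW : Q * W = 0 := by
    rw [hW, Matrix.mul_sub, Matrix.mul_smul]
    simp only [← Matrix.mul_assoc]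
    rw [Matrix.mul_assoc Q B Q, hQBQ, Matrix.smul_mul, smul_smul,
      inv_mul_cancel₀ hc0, one_smul, sub_self]
  have hWP : W * P = W := by
    rw [hP, Matrix.mul_sub, Matrix.mul_one, Matrix.mul_smul, hWQ, smul_zero, sub_zero]
  have hPW : P * W = W := by
    rw [hP, Matrix.sub_mul, Matrix.one_mul, Matrix.smul_mul, hQW, smul_zero, sub_zero]
  -- W * As * P = P
  have hWA : W * As = 1 - c⁻¹ • (B * Q) := by
    rw [hW, Matrix.sub_mul, Matrix.smul_mul, Matrix.mul_assoc (B*Q), hBA, Matrix.mul_one]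
  have hWAP : W * As * P = P := by
    rw [hWA, Matrix.sub_mul, Matrix.one_mul, Matrix.smul_mul, Matrix.mul_assoc, hQP,
      Matrix.mul_zero, smul_zero, sub_zero]
  have hAW : As * W = 1 - c⁻¹ • (Q * B) := by
    rw [hW, Matrix.mul_sub, Matrix.mul_smul, ← Matrix.mul_assoc, ← Matrix.mul_assoc, hAB,
      Matrix.one_mul]
  have hPAW : P * As * W = P := by
    rw [Matrix.mul_assoc, hAW, Matrix.mul_sub, Matrix.mul_one, Matrix.mul_smul,
      ← Matrix.mul_assoc, hPQ, Matrix.zero_mul, smul_zero, sub_zero]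
  set X : Matrix (Fin n) (Fin n) ℝ := P * As * P with hX
  have hWX : W * X = P := by
    rw [hX, ← Matrix.mul_assoc, ← Matrix.mul_assoc, hWP, hWAP]
  have hXW : X * W = P := by
    rw [hX, Matrix.mul_assoc (P * As) P W, hPW, hPAW]
  have h1 : W * X * W = W := by rw [hWX, hPW]
  have h2 : X * W * X = X := by
    rw [hXW, hX, ← Matrix.mul_assoc, ← Matrix.mul_assoc, hPP]
  have h3 : (W * X)ᵀ = W * X := by rw [hWX, hPsym]
  have h4 : (X * W)ᵀ = X * W := by rw [hXW, hPsym]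
  exact ⟨⟨h1, h2, h3, h4⟩, ⟨h2, h1, h4, h3⟩⟩
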